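/- arXiv:nlin/0505018 — 3 statements merged into one kernel-verified Lean document; each statement's English description precedes it below -/
import Mathlib

section
/- Let N be a (1,1)-tensor field on a manifold M whose Nijenhuis torsion vanishes, and let λ be a smooth function that is pointwise a simple root of the characteristic polynomial of N, with eigenvalue multiplicity conditions making λ smooth. Then the differential of λ satisfies the characteristic equation N* dλ = λ dλ. -/
open scoped BigOperators

/-- Partial derivative of a function on `ℝ^m` in the `i`-th coordinate direction. -/
noncomputable def pderiv {m : ℕ} (i : Fin m) (f : (Fin m → ℝ) → ℝ) (x : Fin m → ℝ) : ℝ :=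
  fderiv ℝ f x (Pi.single i 1)

/-- The Jacobi identity for a bivector field written in coordinates. -/
def JacobiId {m : ℕ} (P : (Fin m → ℝ) → Fin m → Fin m → ℝ) : Prop :=
  ∀ x i j k, ∑ l, (P x l j * pderiv l (fun y => P y i k) x
    + P x l i * pderiv l (fun y => P y k j) x
    + P x l k * pderiv l (fun y => P y j i) x) = 0

/-- A Poisson tensor: an antisymmetric bivector field satisfying the Jacobi identity. -/
def IsPoissonTensor {m : ℕ} (P : (Fin m → ℝ) → Fin m → Fin m → ℝ) : Prop :=
  (∀ x i j, P x i j = - P x j i) ∧ JacobiId P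

/-- The Poisson bracket of two functions associated with a bivector `P`. -/
noncomputable def pbracket {m : ℕ} (P : (Fin m → ℝ) → Fin m → Fin m → ℝ)
    (f g : (Fin m → ℝ) → ℝ) (x : Fin m → ℝ) : ℝ :=
  ∑ i, ∑ j, pderiv i f x * P x i j * pderiv j g x

section Helpers
open Matrix Finset

lemma det_updateColumn_eq_sum {m : ℕ} (A : Matrix (Fin m) (Fin m) ℝ) (i : Fin m)
    (c : Fin m → ℝ) :
    (A.updateCol i c).det = ∑ k, c k * A.adjugate i k := by
  have hc : c = ∑ k, c k • (Pi.single k (1:ℝ) : Fin m → ℝ) := by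
    ext j; simp [Pi.single_apply]
  rw [← cramer_apply]
  conv_lhs => rw [hc]
  rw [map_sum]
  simp only [Finset.sum_apply]
  refine Finset.sum_congr rfl fun k _ => ?_
  rw [LinearMap.map_smul]
  simp only [Pi.smul_apply, smul_eq_mul]
  congr 1
  rw [cramer_apply, ← det_transpose, ← updateRow_transpose, ← adjugate_apply,
    ← adjugate_transpose, Matrix.transpose_apply]

lemma sum_adj_smul_apply {m : ℕ} {E : Type*} [NormedAddCommGroup E] [NormedSpace ℝ E]
    (A : Matrix (Fin m) (Fin m) ℝ) (M' : Fin m → Fin m → E →L[ℝ] ℝ) (v : E) :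
    (∑ i, ∑ k, A.adjugate i k • M' k i) v
      = ∑ i, ∑ k, A.adjugate i k * M' k i v := by
  simp [ContinuousLinearMap.sum_apply]

lemma jacobi_det {E : Type*} [NormedAddCommGroup E] [NormedSpace ℝ E]
    {m : ℕ} {M : E → Matrix (Fin m) (Fin m) ℝ} {x : E}
    {M' : Fin m → Fin m → E →L[ℝ] ℝ}
    (h : ∀ i j, HasFDerivAt (fun y => M y i j) (M' i j) x) :
    HasFDerivAt (fun y => (M y).det)
      (∑ i, ∑ k, (M x).adjugate i k • M' k i) x := by
  have hdet : (fun y => (M y).det)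
      = fun y => ∑ σ : Equiv.Perm (Fin m),
          ((Equiv.Perm.sign σ : ℤ) : ℝ) * ∏ i, M y (σ i) i := by
    funext y; rw [Matrix.det_apply']
  rw [hdet]
  have hterm : ∀ σ : Equiv.Perm (Fin m),
      HasFDerivAt (fun y => ((Equiv.Perm.sign σ : ℤ) : ℝ) * ∏ i, M y (σ i) i)
        (((Equiv.Perm.sign σ : ℤ) : ℝ) •
          ∑ i, (∏ j ∈ Finset.univ.erase i, M x (σ j) j) • M' (σ i) i) x := by
    intro σ
    exact (HasFDerivAt.finset_prod (fun i _ => h (σ i) i)).const_mul _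
  have hsum : HasFDerivAt
      (fun y => ∑ σ : Equiv.Perm (Fin m), ((Equiv.Perm.sign σ : ℤ) : ℝ) * ∏ i, M y (σ i) i)
      (∑ σ : Equiv.Perm (Fin m), ((Equiv.Perm.sign σ : ℤ) : ℝ) •
          ∑ i, (∏ j ∈ Finset.univ.erase i, M x (σ j) j) • M' (σ i) i) x :=
    HasFDerivAt.fun_sum (u := Finset.univ)
      (A := fun σ y => ((Equiv.Perm.sign σ : ℤ) : ℝ) * ∏ i, M y (σ i) i)
      (A' := fun σ => ((Equiv.Perm.sign σ : ℤ) : ℝ) •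
          ∑ i, (∏ j ∈ Finset.univ.erase i, M x (σ j) j) • M' (σ i) i)
      (fun σ _ => hterm σ)
  convert hsum using 1
  ext v
  rw [sum_adj_smul_apply]
  simp only [ContinuousLinearMap.sum_apply, ContinuousLinearMap.smul_apply, smul_eq_mul,
    Finset.mul_sum]
  conv_rhs => rw [Finset.sum_comm]
  refine Finset.sum_congr rfl fun i _ => ?_
  have : ∑ σ : Equiv.Perm (Fin m), ((Equiv.Perm.sign σ : ℤ) : ℝ) *
      ((∏ j ∈ Finset.univ.erase i, M x (σ j) j) * M' (σ i) i v)
      = ((M x).updateCol i (fun r => M' r i v)).det := by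
    rw [Matrix.det_apply']
    refine Finset.sum_congr rfl fun σ _ => ?_
    congr 1
    rw [← Finset.mul_prod_erase Finset.univ _ (Finset.mem_univ i)]
    rw [Matrix.updateCol_apply, if_pos rfl, mul_comm]
    congr 1
    refine Finset.prod_congr rfl fun j hj => ?_
    rw [Matrix.updateCol_apply, if_neg (Finset.ne_of_mem_erase hj)]
  rw [this, det_updateColumn_eq_sum]
  exact Finset.sum_congr rfl fun k _ => mul_comm _ _

lemma eval_charpoly' {m : ℕ} (B : Matrix (Fin m) (Fin m) ℝ) (t : ℝ) :
    (Matrix.charpoly B).eval t = (t • (1 : Matrix (Fin m) (Fin m) ℝ) - B).det := by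
  rw [Matrix.charpoly, ← Polynomial.coe_evalRingHom, RingHom.map_det]
  congr 1
  ext i j
  by_cases h : i = j <;>
    simp [Matrix.charmatrix_apply, h, Matrix.one_apply, Polynomial.eval_sub]

lemma trace_adjugate_ne_zero {m : ℕ} (B : Matrix (Fin m) (Fin m) ℝ) (t : ℝ)
    (h : ¬ (Polynomial.derivative (Matrix.charpoly B)).IsRoot t) :
    Matrix.trace (Matrix.adjugate (B - t • (1 : Matrix (Fin m) (Fin m) ℝ))) ≠ 0 := by
  set A := Matrix.adjugate (B - t • (1 : Matrix (Fin m) (Fin m) ℝ)) with hA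
  -- derivative of s ↦ det (B - s • 1) at t, two ways
  have hentry : ∀ i j : Fin m, HasFDerivAt (fun s : ℝ => (B - s • (1 : Matrix (Fin m) (Fin m) ℝ)) i j)
      (ContinuousLinearMap.smulRight (1 : ℝ →L[ℝ] ℝ) (-(1 : Matrix (Fin m) (Fin m) ℝ) i j)) t := by
    intro i j
    have : HasDerivAt (fun s : ℝ => B i j - s * (1 : Matrix (Fin m) (Fin m) ℝ) i j)
        (-(1 : Matrix (Fin m) (Fin m) ℝ) i j) t := by
      simpa using (HasDerivAt.const_sub (B i j) ((hasDerivAt_id t).mul_const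
        ((1 : Matrix (Fin m) (Fin m) ℝ) i j)))
    have h2 := this.hasFDerivAt
    have h3 : HasFDerivAt (fun s : ℝ => (B - s • (1 : Matrix (Fin m) (Fin m) ℝ)) i j)
        (ContinuousLinearMap.toSpanSingleton ℝ (-(1 : Matrix (Fin m) (Fin m) ℝ) i j)) t := h2
    exact h3.congr_fderiv (by ext; simp)
  have hj := (jacobi_det hentry).hasDerivAt
  have h1 : HasDerivAt (fun s : ℝ => (B - s • (1 : Matrix (Fin m) (Fin m) ℝ)).det)
      (- Matrix.trace A) t := by
    convert hj using 1
    rw [sum_adj_smul_apply]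
    simp only [ContinuousLinearMap.smulRight_apply, ContinuousLinearMap.one_apply, one_smul]
    simp only [Matrix.neg_apply, Matrix.one_apply, mul_neg, mul_ite, mul_one, mul_zero]
    simp [Matrix.trace, Matrix.diag, hA]
  have h2 : HasDerivAt (fun s : ℝ => (B - s • (1 : Matrix (Fin m) (Fin m) ℝ)).det)
      ((-1 : ℝ) ^ m * (Polynomial.derivative (Matrix.charpoly B)).eval t) t := by
    have heq : (fun s : ℝ => (B - s • (1 : Matrix (Fin m) (Fin m) ℝ)).det)
        = fun s => (-1 : ℝ) ^ m * (Matrix.charpoly B).eval s := by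
      funext s
      rw [eval_charpoly' B s,
        show B - s • (1 : Matrix (Fin m) (Fin m) ℝ) = -(s • 1 - B) from (neg_sub _ _).symm,
        Matrix.det_neg, Fintype.card_fin]
    rw [heq]
    simpa using ((Matrix.charpoly B).hasDerivAt t).const_mul ((-1 : ℝ) ^ m)
  have := h1.unique h2
  intro htr
  rw [htr, neg_zero] at this
  have := this.symm
  rcases mul_eq_zero.1 this with h' | h'
  · exact absurd h' (by positivity)
  · exact h h'


end Helpers

/-- If the Nijenhuis torsion of the (1,1)-tensor field `N` vanishes and `λ` is a smooth
function which is pointwise a simple root of the characteristic polynomial of `N`, then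
`N* dλ = λ dλ`. -/
theorem stmt2 {m : ℕ} (N : (Fin m → ℝ) → Matrix (Fin m) (Fin m) ℝ)
    (lam : (Fin m → ℝ) → ℝ)
    (hN : ∀ i j, ContDiff ℝ (⊤ : ℕ∞) (fun x => N x i j)) (hlam : ContDiff ℝ (⊤ : ℕ∞) lam)
    (htorsion : ∀ x i j k,
      ∑ l, (N x l j * pderiv l (fun y => N y i k) x
        - N x l k * pderiv l (fun y => N y i j) x
        - N x i l * (pderiv j (fun y => N y l k) x - pderiv k (fun y => N y l j) x)) = 0)
    (hroot : ∀ x, (Matrix.charpoly (N x)).IsRoot (lam x))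
    (hsimple : ∀ x, ¬ (Polynomial.derivative (Matrix.charpoly (N x))).IsRoot (lam x)) :
    ∀ x i, ∑ j, N x j i * pderiv j lam x = lam x * pderiv i lam x := by
  classical
  intro x i
  have hdetzero : ∀ y, (N y - lam y • (1 : Matrix (Fin m) (Fin m) ℝ)).det = 0 := by
    intro y
    have h := hroot y
    rw [Polynomial.IsRoot, eval_charpoly'] at h
    rw [show N y - lam y • (1 : Matrix (Fin m) (Fin m) ℝ) = -(lam y • 1 - N y) from
      (neg_sub _ _).symm, Matrix.det_neg, Fintype.card_fin, h, mul_zero]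
  set B := N x with hB
  set l0 := lam x with hl0
  set A := Matrix.adjugate (B - l0 • (1 : Matrix (Fin m) (Fin m) ℝ)) with hA
  have h0 : (B - l0 • (1 : Matrix (Fin m) (Fin m) ℝ)).det = 0 := hdetzero x
  have hBA : B * A = l0 • A := by
    have h := Matrix.mul_adjugate (B - l0 • (1 : Matrix (Fin m) (Fin m) ℝ))
    rw [h0, zero_smul, ← hA, sub_mul, Matrix.smul_mul, Matrix.one_mul, sub_eq_zero] at h
    exact h
  have hAB : A * B = l0 • A := by
    have h := Matrix.adjugate_mul (B - l0 • (1 : Matrix (Fin m) (Fin m) ℝ))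
    rw [h0, zero_smul, ← hA, mul_sub, Matrix.mul_smul, Matrix.mul_one, sub_eq_zero] at h
    exact h
  have htr : Matrix.trace A ≠ 0 := trace_adjugate_ne_zero B l0 (hsimple x)
  set D : Fin m → Matrix (Fin m) (Fin m) ℝ :=
    fun l => Matrix.of fun a b => pderiv l (fun y => N y a b) x with hD
  set φ : Fin m → ℝ := fun l => Matrix.trace (A * D l) with hφ
  -- the derivative facts
  set M' : Fin m → Fin m → (Fin m → ℝ) →L[ℝ] ℝ := fun a b =>
    fderiv ℝ (fun y => N y a b) x
      - (1 : Matrix (Fin m) (Fin m) ℝ) a b • fderiv ℝ lam x with hM'def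
  have hM' : ∀ a b, HasFDerivAt
      (fun y => (N y - lam y • (1 : Matrix (Fin m) (Fin m) ℝ)) a b) (M' a b) x := by
    intro a b
    have h1 : HasFDerivAt (fun y => N y a b) (fderiv ℝ (fun y => N y a b) x) x :=
      (((hN a b).differentiable (by simp)) x).hasFDerivAt
    have h2 : HasFDerivAt lam (fderiv ℝ lam x) x :=
      ((hlam.differentiable (by simp)) x).hasFDerivAt
    have h3 := h1.sub (h2.mul_const ((1 : Matrix (Fin m) (Fin m) ℝ) a b))
    have heq : (fun y => (N y - lam y • (1 : Matrix (Fin m) (Fin m) ℝ)) a b)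
        = fun y => N y a b - lam y * (1 : Matrix (Fin m) (Fin m) ℝ) a b := by
      funext y; simp [Matrix.sub_apply]
    rw [heq, hM'def]
    exact h3
  have hJ := jacobi_det hM'
  have hzero : HasFDerivAt (fun y => (N y - lam y • (1 : Matrix (Fin m) (Fin m) ℝ)).det)
      (0 : (Fin m → ℝ) →L[ℝ] ℝ) x := by
    have he : (fun y => (N y - lam y • (1 : Matrix (Fin m) (Fin m) ℝ)).det)
        = fun _ => (0 : ℝ) := funext hdetzero
    rw [he]; exact hasFDerivAt_const 0 x
  have hL : (∑ a, ∑ k, A a k • M' k a) = 0 := by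
    rw [hA]; exact hJ.unique hzero
  have hphi : ∀ j, φ j = pderiv j lam x * Matrix.trace A := by
    intro j
    have h := congrArg (fun L : (Fin m → ℝ) →L[ℝ] ℝ => L (Pi.single j 1)) hL
    simp only [ContinuousLinearMap.zero_apply] at h
    rw [sum_adj_smul_apply] at h
    have hM'v : ∀ k a, M' k a (Pi.single j 1)
        = D j k a - (1 : Matrix (Fin m) (Fin m) ℝ) k a * pderiv j lam x := by
      intro k a
      simp [hM'def, hD, pderiv, ContinuousLinearMap.sub_apply]
    have h2 : ∑ a, ∑ k, A a k * (D j k a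
        - (1 : Matrix (Fin m) (Fin m) ℝ) k a * pderiv j lam x) = 0 := by
      rw [← h]; exact Finset.sum_congr rfl fun a _ => Finset.sum_congr rfl
        fun k _ => by rw [hM'v]
    have h3 : ∑ a, ∑ k, A a k * D j k a
        - (∑ a, ∑ k, A a k * (1 : Matrix (Fin m) (Fin m) ℝ) k a) * pderiv j lam x = 0 := by
      rw [← h2]
      rw [Finset.sum_mul, ← Finset.sum_sub_distrib]
      refine Finset.sum_congr rfl fun a _ => ?_
      rw [Finset.sum_mul, ← Finset.sum_sub_distrib]
      refine Finset.sum_congr rfl fun k _ => by ring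
    have h4 : ∑ a, ∑ k, A a k * (1 : Matrix (Fin m) (Fin m) ℝ) k a = Matrix.trace A := by
      unfold Matrix.trace Matrix.diag
      refine Finset.sum_congr rfl fun a _ => ?_
      simp [Matrix.one_apply, mul_ite]
    have h5 : φ j = ∑ a, ∑ k, A a k * D j k a := by
      rw [hφ]
      unfold Matrix.trace Matrix.diag
      refine Finset.sum_congr rfl fun a _ => ?_
      simp [Matrix.mul_apply]
    rw [h5]
    rw [h4] at h3
    linarith
  -- the torsion contraction, matrix form
  set C : Matrix (Fin m) (Fin m) ℝ := Matrix.of fun a l => pderiv l (fun y => N y a i) x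
    with hC
  have htorsMat : (∑ l, B l i • D l) - C * B - (B * D i - B * C) = 0 := by
    ext a b
    have ht := htorsion x a i b
    simp only [mul_sub, Finset.sum_sub_distrib] at ht
    simp only [Matrix.sub_apply, Matrix.zero_apply, Matrix.sum_apply, Matrix.smul_apply,
      Matrix.mul_apply, Matrix.of_apply, smul_eq_mul, hD, hC, hB]
    have hcm : ∑ l, pderiv l (fun y => N y a i) x * N x l b
        = ∑ l, N x l b * pderiv l (fun y => N y a i) x :=
      Finset.sum_congr rfl fun l _ => mul_comm _ _
    linear_combination ht - hcm
  have hkey : ∑ l, B l i * φ l = l0 * φ i := by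
    have h := congrArg (fun X : Matrix (Fin m) (Fin m) ℝ => Matrix.trace (A * X)) htorsMat
    simp only [Matrix.mul_zero, Matrix.trace_zero] at h
    simp only [Matrix.mul_sub, Matrix.trace_sub] at h
    have e1 : Matrix.trace (A * ∑ l, B l i • D l) = ∑ l, B l i * φ l := by
      rw [Matrix.mul_sum, Matrix.trace_sum]
      refine Finset.sum_congr rfl fun l _ => ?_
      rw [Matrix.mul_smul, Matrix.trace_smul, hφ]
      simp
    have e2 : Matrix.trace (A * (C * B)) = l0 * Matrix.trace (A * C) := by
      rw [← Matrix.mul_assoc, Matrix.trace_mul_comm, ← Matrix.mul_assoc, hBA,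
        Matrix.smul_mul, Matrix.trace_smul, smul_eq_mul]
    have e3 : Matrix.trace (A * (B * D i)) = l0 * φ i := by
      rw [← Matrix.mul_assoc, hAB, Matrix.smul_mul, Matrix.trace_smul, hφ]
      simp
    have e4 : Matrix.trace (A * (B * C)) = l0 * Matrix.trace (A * C) := by
      rw [← Matrix.mul_assoc, hAB, Matrix.smul_mul, Matrix.trace_smul, smul_eq_mul]
    rw [e1, e2, e3, e4] at h
    linarith
  have hfinal : (∑ j, B j i * pderiv j lam x) * Matrix.trace A
      = (l0 * pderiv i lam x) * Matrix.trace A := by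
    rw [Finset.sum_mul]
    have : ∑ j, B j i * pderiv j lam x * Matrix.trace A = ∑ j, B j i * φ j := by
      refine Finset.sum_congr rfl fun j _ => ?_
      rw [hphi j]; ring
    rw [this, hkey, hphi i]; ring
  exact mul_right_cancel₀ htr hfinal
end

section
/- Suppose Φ(λ) is a smooth function on an ωN manifold M depending on a parameter λ, satisfying N* dΦ(λ) = λ dΦ(λ) + Δ_N(λ) α_Φ for some one-form α_Φ, where Δ_N is the minimal polynomial of the Nijenhuis tensor N. Then for each root λᵢ of Δ_N, the function Φᵢ := Φ(λᵢ) (evaluation of the generating function at λ = λᵢ) satisfies N* dΦᵢ = λᵢ dΦᵢ. -/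
open scoped BigOperators

/-- If a generating function `Φ(λ)` satisfies `N* dΦ(λ) = λ dΦ(λ) + Δ_N(λ) α_Φ` for some
one-form `α_Φ`, where `Δ_N(λ) = ∏ᵢ (λ - λᵢ)` is the minimal polynomial of the Nijenhuis
tensor `N` (with roots satisfying `N* dλᵢ = λᵢ dλᵢ`), then each evaluation
`Φₐ := Φ(λₐ)` satisfies `N* dΦₐ = λₐ dΦₐ`. -/
theorem stmt4 {nn : ℕ} (N : (Fin (2 * nn) → ℝ) → Matrix (Fin (2 * nn)) (Fin (2 * nn)) ℝ)
    (lam : Fin nn → (Fin (2 * nn) → ℝ) → ℝ)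
    (Phi : ℝ → (Fin (2 * nn) → ℝ) → ℝ)
    (alpha : ℝ → (Fin (2 * nn) → ℝ) → Fin (2 * nn) → ℝ)
    (hsmlam : ∀ a, ContDiff ℝ (⊤ : ℕ∞) (lam a))
    (hsmPhi : ContDiff ℝ (⊤ : ℕ∞) (fun p : ℝ × (Fin (2 * nn) → ℝ) => Phi p.1 p.2))
    (heiglam : ∀ a x i, ∑ j, N x j i * pderiv j (lam a) x = lam a x * pderiv i (lam a) x)
    (hgen : ∀ (t : ℝ) x i, ∑ j, N x j i * pderiv j (Phi t) x
      = t * pderiv i (Phi t) x + (∏ b, (t - lam b x)) * alpha t x i) :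
    ∀ (a : Fin nn) x i,
      ∑ j, N x j i * pderiv j (fun y => Phi (lam a y) y) x
        = lam a x * pderiv i (fun y => Phi (lam a y) y) x := by

  intro a x i
  classical
  have hFd : Differentiable ℝ (fun p : ℝ × (Fin (2 * nn) → ℝ) => Phi p.1 p.2) :=
    hsmPhi.differentiable (by simp)
  set L := fderiv ℝ (fun p : ℝ × (Fin (2 * nn) → ℝ) => Phi p.1 p.2) (lam a x, x) with hL
  have hlamd : DifferentiableAt ℝ (lam a) x :=
    ((hsmlam a).differentiable (by simp)).differentiableAt
  have hcomp : HasFDerivAt (fun y => Phi (lam a y) y)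
      (L.comp ((fderiv ℝ (lam a) x).prod (ContinuousLinearMap.id ℝ _))) x := by
    have hg : HasFDerivAt (fun y => (lam a y, y))
        ((fderiv ℝ (lam a) x).prod (ContinuousLinearMap.id ℝ _)) x :=
      HasFDerivAt.prodMk hlamd.hasFDerivAt (hasFDerivAt_id x)
    have h := HasFDerivAt.comp (f := fun y => (lam a y, y)) x
      ((hFd (lam a x, x)).hasFDerivAt) hg
    exact h
  have hpdc : ∀ j, pderiv j (fun y => Phi (lam a y) y) x
      = L (pderiv j (lam a) x, Pi.single j 1) := by
    intro j
    simp [pderiv, hcomp.fderiv]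
  have hpart : ∀ j, pderiv j (Phi (lam a x)) x = L (0, Pi.single j 1) := by
    intro j
    have hg : HasFDerivAt (fun y : Fin (2 * nn) → ℝ => ((lam a x : ℝ), y))
        (((0 : (Fin (2 * nn) → ℝ) →L[ℝ] ℝ)).prod (ContinuousLinearMap.id ℝ _)) x :=
      HasFDerivAt.prodMk (hasFDerivAt_const _ _) (hasFDerivAt_id x)
    have h2 : HasFDerivAt (fun y => Phi (lam a x) y)
        (L.comp (((0 : (Fin (2 * nn) → ℝ) →L[ℝ] ℝ)).prod (ContinuousLinearMap.id ℝ _))) x :=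
      HasFDerivAt.comp (f := fun y : Fin (2 * nn) → ℝ => ((lam a x : ℝ), y)) x
        ((hFd (lam a x, x)).hasFDerivAt) hg
    simp [pderiv, h2.fderiv]
  have hlin : ∀ (s : ℝ) (v : Fin (2 * nn) → ℝ), L (s, v) = s * L (1, 0) + L (0, v) := by
    intro s v
    have hsv : (s, v) = s • ((1 : ℝ), (0 : Fin (2 * nn) → ℝ)) + (0, v) := by
      simp [Prod.ext_iff]
    rw [hsv, map_add, map_smul, smul_eq_mul]
  have key : ∀ j, pderiv j (fun y => Phi (lam a y) y) x
      = pderiv j (lam a) x * L (1, 0) + pderiv j (Phi (lam a x)) x := by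
    intro j; rw [hpdc j, hlin, hpart j]
  have hprod0 : (∏ b, (lam a x - lam b x)) = 0 :=
    Finset.prod_eq_zero (Finset.mem_univ a) (by ring)
  calc ∑ j, N x j i * pderiv j (fun y => Phi (lam a y) y) x
      = ∑ j, (N x j i * pderiv j (lam a) x * L (1, 0)
          + N x j i * pderiv j (Phi (lam a x)) x) := by
        refine Finset.sum_congr rfl fun j _ => ?_
        rw [key j]; ring
    _ = (∑ j, N x j i * pderiv j (lam a) x) * L (1, 0)
          + ∑ j, N x j i * pderiv j (Phi (lam a x)) x := by
        rw [Finset.sum_add_distrib, Finset.sum_mul]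
    _ = (lam a x * pderiv i (lam a) x) * L (1, 0)
          + (lam a x * pderiv i (Phi (lam a x)) x
            + (∏ b, (lam a x - lam b x)) * alpha (lam a x) x i) := by
        rw [heiglam a x i, hgen (lam a x) x i]
    _ = lam a x * (pderiv i (lam a) x * L (1, 0) + pderiv i (Phi (lam a x)) x) := by
        rw [hprod0]; ring
    _ = lam a x * pderiv i (fun y => Phi (lam a y) y) x := by rw [key i]
end

section
/- Let (M, P₀, P₁) be a bi-Hamiltonian manifold and H(λ) = Σⱼ Hⱼ λ^(d-j) a polynomial Casimir of the pencil, i.e., (P₁ - λP₀) dH(λ) = 0 identically in λ. Then the coefficients Hⱼ satisfy the Lenard–Magri relations: P₁ dHⱼ = P₀ dHⱼ₊₁ for 0 ≤ j < d, P₁ dH_d = 0, and P₀ dH₀ = 0. Consequently all coefficients Hⱼ are in involution with respect to both Poisson brackets: {Hᵢ, Hⱼ}₀ = {Hᵢ, Hⱼ}₁ = 0 for all i, j. -/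
open scoped BigOperators

-- bracket in "vector" form
lemma pb_vec {m : ℕ} (P : (Fin m → ℝ) → Fin m → Fin m → ℝ)
    (f g : (Fin m → ℝ) → ℝ) (x : Fin m → ℝ) :
    pbracket P f g x = ∑ i, pderiv i f x * (∑ l, P x i l * pderiv l g x) := by
  unfold pbracket
  refine Finset.sum_congr rfl fun i _ => ?_
  rw [Finset.mul_sum]
  exact Finset.sum_congr rfl fun j _ => by ring

lemma pb_anti {m : ℕ} {P : (Fin m → ℝ) → Fin m → Fin m → ℝ}
    (hP : ∀ x i j, P x i j = -P x j i)
    (f g : (Fin m → ℝ) → ℝ) (x : Fin m → ℝ) :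
    pbracket P f g x = - pbracket P g f x := by
  unfold pbracket
  rw [Finset.sum_comm, ← Finset.sum_neg_distrib]
  refine Finset.sum_congr rfl fun i _ => ?_
  rw [← Finset.sum_neg_distrib]
  refine Finset.sum_congr rfl fun j _ => ?_
  rw [hP x j i]; ring

lemma pderiv_poly_sum {m d : ℕ} (H : Fin (d + 1) → (Fin m → ℝ) → ℝ)
    (hH : ∀ j, ContDiff ℝ (⊤ : ℕ∞) (H j)) (t : ℝ) (x : Fin m → ℝ) (l : Fin m) :
    pderiv l (fun y => ∑ jj : Fin (d + 1), H jj y * t ^ (d - (jj : ℕ))) x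
      = ∑ jj : Fin (d + 1), pderiv l (H jj) x * t ^ (d - (jj : ℕ)) := by
  unfold pderiv
  rw [fderiv_fun_sum (fun jj _ => (((hH jj).differentiable (by simp)).differentiableAt).mul_const _)]
  rw [ContinuousLinearMap.sum_apply]
  refine Finset.sum_congr rfl fun jj _ => ?_
  rw [fderiv_mul_const ((hH jj).differentiable (by simp)).differentiableAt]
  simp [mul_comm]

theorem stmt5' {m d : ℕ} (P0 P1 : (Fin m → ℝ) → Fin m → Fin m → ℝ)
    (hP0 : ∀ x i j, P0 x i j = - P0 x j i) (hP1 : ∀ x i j, P1 x i j = - P1 x j i)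
    (H : Fin (d + 1) → (Fin m → ℝ) → ℝ)
    (hH : ∀ j, ContDiff ℝ (⊤ : ℕ∞) (H j))
    (hcas : ∀ (t : ℝ) x i,
      ∑ l, (P1 x i l - t * P0 x i l)
        * pderiv l (fun y => ∑ jj : Fin (d + 1), H jj y * t ^ (d - (jj : ℕ))) x = 0) :
    (∀ x i, ∑ l, P0 x i l * pderiv l (H 0) x = 0) ∧
    (∀ x i, ∑ l, P1 x i l * pderiv l (H (Fin.last d)) x = 0) ∧
    (∀ (j : Fin d) x i, ∑ l, P1 x i l * pderiv l (H j.castSucc) x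
      = ∑ l, P0 x i l * pderiv l (H j.succ) x) ∧
    (∀ a b x, pbracket P0 (H a) (H b) x = 0 ∧ pbracket P1 (H a) (H b) x = 0) := by
  set A : Fin (d + 1) → (Fin m → ℝ) → Fin m → ℝ :=
    fun jj x i => ∑ l, P1 x i l * pderiv l (H jj) x with hA
  set B : Fin (d + 1) → (Fin m → ℝ) → Fin m → ℝ :=
    fun jj x i => ∑ l, P0 x i l * pderiv l (H jj) x with hB
  -- rearranged Casimir identity
  have key : ∀ (t : ℝ) x i,
      (∑ jj : Fin (d + 1), A jj x i * t ^ (d - (jj : ℕ)))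
        - t * (∑ jj : Fin (d + 1), B jj x i * t ^ (d - (jj : ℕ))) = 0 := by
    intro t x i
    have h := hcas t x i
    simp only [pderiv_poly_sum H hH t x] at h
    rw [← h]
    have e1 : ∀ (Q : Fin m → ℝ),
        (∑ jj : Fin (d + 1), (∑ l, Q l * pderiv l (H jj) x) * t ^ (d - (jj : ℕ)))
          = ∑ l, Q l * ∑ jj : Fin (d + 1), pderiv l (H jj) x * t ^ (d - (jj : ℕ)) := by
      intro Q
      simp only [Finset.sum_mul, Finset.mul_sum]
      rw [Finset.sum_comm]
      exact Finset.sum_congr rfl fun l _ => Finset.sum_congr rfl fun jj _ => by ring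
    rw [hA, hB]
    rw [e1 (fun l => P1 x i l), e1 (fun l => P0 x i l), Finset.mul_sum,
      ← Finset.sum_sub_distrib]
    exact Finset.sum_congr rfl fun l _ => by ring
  -- polynomial coefficient extraction
  classical
  have hinj : ∀ (j jj : Fin (d + 1)), d - (jj : ℕ) = d - (j : ℕ) → jj = j := by
    intro j jj h
    have := j.isLt; have := jj.isLt
    exact Fin.ext (by omega)
  have hcoeff : ∀ (c : Fin (d + 1) → ℝ) (j : Fin (d + 1)),
      (∑ jj : Fin (d + 1), Polynomial.C (c jj) * Polynomial.X ^ (d - (jj : ℕ))).coeff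
        (d - (j : ℕ)) = c j := by
    intro c j
    rw [Polynomial.finset_sum_coeff]
    simp only [Polynomial.coeff_C_mul, Polynomial.coeff_X_pow]
    rw [Finset.sum_eq_single j]
    · simp
    · intro b _ hb
      rw [if_neg (fun h => hb ((hinj b j h).symm)), mul_zero]
    · simp
  have hzero : ∀ x i,
      ((∑ jj : Fin (d + 1), Polynomial.C (A jj x i) * Polynomial.X ^ (d - (jj : ℕ)))
        - Polynomial.X *
          (∑ jj : Fin (d + 1), Polynomial.C (B jj x i) * Polynomial.X ^ (d - (jj : ℕ)))) = 0 := by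
    intro x i
    apply Polynomial.funext
    intro t
    have := key t x i
    simp only [Polynomial.eval_sub, Polynomial.eval_mul, Polynomial.eval_finset_sum,
      Polynomial.eval_C, Polynomial.eval_pow, Polynomial.eval_X, Polynomial.eval_zero]
    linarith [key t x i]
  -- Lenard–Magri relations
  have hB0 : ∀ x i, B 0 x i = 0 := by
    intro x i
    have h := congrArg (fun p => Polynomial.coeff p (d + 1)) (hzero x i)
    simp only [Polynomial.coeff_sub, Polynomial.coeff_zero] at h
    rw [Polynomial.coeff_X_mul] at h
    have h1 : (∑ jj : Fin (d + 1), Polynomial.C (A jj x i)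
        * Polynomial.X ^ (d - (jj : ℕ))).coeff (d + 1) = 0 := by
      rw [Polynomial.finset_sum_coeff]
      refine Finset.sum_eq_zero fun jj _ => ?_
      rw [Polynomial.coeff_C_mul, Polynomial.coeff_X_pow, if_neg (by omega), mul_zero]
    rw [h1] at h
    have h2 := hcoeff (fun jj => B jj x i) 0
    simp only [Fin.val_zero, Nat.sub_zero] at h2
    rw [h2] at h
    linarith
  have hAd : ∀ x i, A (Fin.last d) x i = 0 := by
    intro x i
    have h := congrArg (fun p => Polynomial.coeff p 0) (hzero x i)
    simp only [Polynomial.coeff_sub, Polynomial.coeff_zero,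
      Polynomial.mul_coeff_zero, Polynomial.coeff_X_zero, zero_mul, sub_zero] at h
    have h1 := hcoeff (fun jj => A jj x i) (Fin.last d)
    simp only [Fin.val_last, Nat.sub_self] at h1
    rw [h1] at h
    exact h
  have hrec : ∀ (j : Fin d) x i, A j.castSucc x i = B j.succ x i := by
    intro j x i
    have hj := j.isLt
    have h := congrArg (fun p => Polynomial.coeff p (d - (j : ℕ))) (hzero x i)
    simp only [Polynomial.coeff_sub, Polynomial.coeff_zero] at h
    have e : d - (j : ℕ) = (d - ((j.succ : Fin (d+1)) : ℕ)) + 1 := by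
      simp only [Fin.val_succ]; omega
    rw [e, Polynomial.coeff_X_mul, hcoeff (fun jj => B jj x i) j.succ] at h
    have h1 := hcoeff (fun jj => A jj x i) j.castSucc
    have e2 : d - ((j.castSucc : Fin (d+1)) : ℕ) = (d - ((j.succ : Fin (d+1)) : ℕ)) + 1 := by
      simp only [Fin.val_succ, Fin.coe_castSucc]; omega
    rw [e2] at h1
    rw [h1] at h
    linarith
  have hB0' : ∀ x i, ∑ l, P0 x i l * pderiv l (H 0) x = 0 := hB0
  have hAd' : ∀ x i, ∑ l, P1 x i l * pderiv l (H (Fin.last d)) x = 0 := hAd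
  have hrec' : ∀ (j : Fin d) x i, ∑ l, P1 x i l * pderiv l (H j.castSucc) x
      = ∑ l, P0 x i l * pderiv l (H j.succ) x := hrec
  refine ⟨hB0', hAd', hrec', ?_⟩
  -- involution
  have main0 : ∀ (n : ℕ) (b : Fin (d + 1)), (b : ℕ) = n →
      ∀ (a : Fin (d + 1)) x, pbracket P0 (H a) (H b) x = 0 := by
    intro n
    induction n with
    | zero =>
      intro b hb a x
      have : b = 0 := Fin.ext hb
      subst this
      rw [pb_vec]
      exact Finset.sum_eq_zero fun i _ => by rw [hB0' x i, mul_zero]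
    | succ n ih =>
      intro b hb a x
      have hn : n < d := by have := b.isLt; omega
      have hbj : b = (⟨n, hn⟩ : Fin d).succ := Fin.ext (by simp [hb])
      subst hbj
      rw [pb_vec]
      have step1 : ∀ i, (∑ l, P0 x i l * pderiv l (H (⟨n, hn⟩ : Fin d).succ) x)
          = ∑ l, P1 x i l * pderiv l (H (⟨n, hn⟩ : Fin d).castSucc) x :=
        fun i => (hrec' ⟨n, hn⟩ x i).symm
      simp only [step1]
      have : (∑ i, pderiv i (H a) x *
          (∑ l, P1 x i l * pderiv l (H (⟨n, hn⟩ : Fin d).castSucc) x))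
          = pbracket P1 (H a) (H (⟨n, hn⟩ : Fin d).castSucc) x := (pb_vec ..).symm
      rw [this, pb_anti hP1, pb_vec]
      rcases Fin.eq_castSucc_or_eq_last a with ⟨k, rfl⟩ | rfl
      · have step2 : ∀ i, (∑ l, P1 x i l * pderiv l (H k.castSucc) x)
            = ∑ l, P0 x i l * pderiv l (H k.succ) x := fun i => hrec' k x i
        simp only [step2]
        have e3 : (∑ i, pderiv i (H (⟨n, hn⟩ : Fin d).castSucc) x *
            (∑ l, P0 x i l * pderiv l (H k.succ) x))
            = pbracket P0 (H (⟨n, hn⟩ : Fin d).castSucc) (H k.succ) x := (pb_vec ..).symm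
        rw [e3, pb_anti hP0, ih (⟨n, hn⟩ : Fin d).castSucc (by simp) k.succ x]
        simp
      · simp only [hAd' x]
        simp
  have main0' : ∀ (a b : Fin (d + 1)) x, pbracket P0 (H a) (H b) x = 0 :=
    fun a b x => main0 b b rfl a x
  intro a b x
  refine ⟨main0' a b x, ?_⟩
  rw [pb_anti hP1, pb_vec]
  rcases Fin.eq_castSucc_or_eq_last a with ⟨k, rfl⟩ | rfl
  · have step2 : ∀ i, (∑ l, P1 x i l * pderiv l (H k.castSucc) x)
        = ∑ l, P0 x i l * pderiv l (H k.succ) x := fun i => hrec' k x i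
    simp only [step2]
    have e3 : (∑ i, pderiv i (H b) x * (∑ l, P0 x i l * pderiv l (H k.succ) x))
        = pbracket P0 (H b) (H k.succ) x := (pb_vec ..).symm
    rw [e3, main0' b k.succ x]
    simp
  · simp only [hAd' x]
    simp

/-- On a bi-Hamiltonian manifold, the coefficients of a polynomial Casimir
`H(λ) = Σⱼ Hⱼ λ^(d-j)` of the pencil `P₁ - λ P₀` satisfy the Lenard–Magri recursion
relations and are in involution with respect to both Poisson brackets. -/
theorem stmt5 {m d : ℕ} (P0 P1 : (Fin m → ℝ) → Fin m → Fin m → ℝ)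
    (hP0 : IsPoissonTensor P0) (hP1 : IsPoissonTensor P1)
    (hpencil : ∀ t : ℝ, IsPoissonTensor (fun x i j => P1 x i j - t * P0 x i j))
    (H : Fin (d + 1) → (Fin m → ℝ) → ℝ)
    (hH : ∀ j, ContDiff ℝ (⊤ : ℕ∞) (H j))
    (hcas : ∀ (t : ℝ) x i,
      ∑ l, (P1 x i l - t * P0 x i l)
        * pderiv l (fun y => ∑ jj : Fin (d + 1), H jj y * t ^ (d - (jj : ℕ))) x = 0) :
    (∀ x i, ∑ l, P0 x i l * pderiv l (H 0) x = 0) ∧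
    (∀ x i, ∑ l, P1 x i l * pderiv l (H (Fin.last d)) x = 0) ∧
    (∀ (j : Fin d) x i, ∑ l, P1 x i l * pderiv l (H j.castSucc) x
      = ∑ l, P0 x i l * pderiv l (H j.succ) x) ∧
    (∀ a b x, pbracket P0 (H a) (H b) x = 0 ∧ pbracket P1 (H a) (H b) x = 0) :=
  stmt5' P0 P1 hP0.1 hP1.1 H hH hcas
end
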